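/- arXiv:1305.3821 — 4 statements merged into one kernel-verified Lean document; each statement's English description precedes it below -/
import Mathlib

section
/- Every normalisable dagger Frobenius algebra in a dagger compact category is symmetric: ε∘μ∘σ = ε∘μ, where ε = η† is the counit and σ is the symmetry. -/
/-!
The trace form `τ = Tr_A(μ)` of an associative multiplication is symmetric:
`τ(ab) = Tr(L_a ∘ L_b) = Tr(L_b ∘ L_a) = τ(ba)` by cyclicity of the partial trace, which holds in
any symmetric monoidal category with duals because a morphism can be slid around the loop of a
trace, passing through the cup as its mate and returning through the cap. For a normaliser `z`,
centrality turns `η† ∘ μ = τ ∘ z² ∘ μ` into `τ ∘ μ ∘ (z ⊗ z)`, and `z ⊗ z` commutes with the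
symmetry, so `η† ∘ μ` inherits the symmetry of `τ ∘ μ`.
-/

open CategoryTheory MonoidalCategory

universe v u

/-- A dagger compact category: a symmetric monoidal category equipped with an
identity-on-objects contravariant involution `dag` compatible with the monoidal
structure, and with chosen duals with cups `coev` and caps `ev` satisfying the snake
equations, compatibly with the dagger. -/
class DaggerCompactCategory (C : Type u) [Category.{v} C] [MonoidalCategory C]
    [SymmetricCategory C] : Type (max u v) where
  dag : ∀ {X Y : C}, (X ⟶ Y) → (Y ⟶ X)
  dag_dag : ∀ {X Y : C} (f : X ⟶ Y), dag (dag f) = f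
  dag_comp : ∀ {X Y Z : C} (f : X ⟶ Y) (g : Y ⟶ Z), dag (f ≫ g) = dag g ≫ dag f
  dag_id : ∀ X : C, dag (𝟙 X) = 𝟙 X
  dag_tensorHom : ∀ {X Y Z W : C} (f : X ⟶ Y) (g : Z ⟶ W), dag (f ⊗ₘ g) = dag f ⊗ₘ dag g
  dag_associator : ∀ X Y Z : C, dag (α_ X Y Z).hom = (α_ X Y Z).inv
  dag_leftUnitor : ∀ X : C, dag (λ_ X).hom = (λ_ X).inv
  dag_rightUnitor : ∀ X : C, dag (ρ_ X).hom = (ρ_ X).inv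
  dag_braiding : ∀ X Y : C, dag (β_ X Y).hom = (β_ X Y).inv
  dual : C → C
  coev : ∀ X : C, 𝟙_ C ⟶ dual X ⊗ X
  ev : ∀ X : C, X ⊗ dual X ⟶ 𝟙_ C
  snake₁ : ∀ X : C,
    (ρ_ X).inv ≫ (𝟙 X ⊗ₘ coev X) ≫ (α_ X (dual X) X).inv ≫ (ev X ⊗ₘ 𝟙 X) ≫ (λ_ X).hom = 𝟙 X
  snake₂ : ∀ X : C,
    (λ_ (dual X)).inv ≫ (coev X ⊗ₘ 𝟙 (dual X)) ≫ (α_ (dual X) X (dual X)).hom ≫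
      (𝟙 (dual X) ⊗ₘ ev X) ≫ (ρ_ (dual X)).hom = 𝟙 (dual X)
  dag_coev : ∀ X : C, dag (coev X) = (β_ (dual X) X).hom ≫ ev X

namespace DaggerCompactCategory

variable {C : Type u} [Category.{v} C] [MonoidalCategory C] [SymmetricCategory C]
  [DaggerCompactCategory C]

/-- The trace of the identity (the "dimension" scalar) of an object. -/
def traceScalar (X : C) : 𝟙_ C ⟶ 𝟙_ C := coev X ≫ (β_ (dual X) X).hom ≫ ev X

/-- The "loop" obtained from `μ : A ⊗ A ⟶ A` by tracing the output against the
second input: the partial trace `Tr_A(μ) : A ⟶ I`. -/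
def rightLoop {A : C} (μ : A ⊗ A ⟶ A) : A ⟶ 𝟙_ C :=
  (ρ_ A).inv ≫ (𝟙 A ⊗ₘ coev A) ≫ (𝟙 A ⊗ₘ (β_ (dual A) A).hom) ≫ (α_ A A (dual A)).inv ≫
    (μ ⊗ₘ 𝟙 (dual A)) ≫ ev A

/-- The "loop" obtained from `μ : A ⊗ A ⟶ A` by tracing the output against the
first input. -/
def leftLoop {A : C} (μ : A ⊗ A ⟶ A) : A ⟶ 𝟙_ C :=
  (λ_ A).inv ≫ (coev A ⊗ₘ 𝟙 A) ≫ (α_ (dual A) A A).hom ≫ (𝟙 (dual A) ⊗ₘ μ) ≫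
    (β_ (dual A) A).hom ≫ ev A

/-- The data of an algebra: a multiplication and a unit on an object `A`. -/
structure FrobeniusData (A : C) where
  mul : A ⊗ A ⟶ A
  unit : 𝟙_ C ⟶ A

/-- `(A, μ, η)` is a dagger Frobenius algebra: associativity, unitality and the
Frobenius law `Δ ∘ μ = (μ ⊗ id) ∘ (id ⊗ Δ)` with `Δ = μ†`. -/
structure IsFrobenius {A : C} (F : FrobeniusData A) : Prop where
  assoc : (F.mul ⊗ₘ 𝟙 A) ≫ F.mul = (α_ A A A).hom ≫ (𝟙 A ⊗ₘ F.mul) ≫ F.mul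
  unit_left : (F.unit ⊗ₘ 𝟙 A) ≫ F.mul = (λ_ A).hom
  unit_right : (𝟙 A ⊗ₘ F.unit) ≫ F.mul = (ρ_ A).hom
  frobenius : F.mul ≫ dag F.mul = (𝟙 A ⊗ₘ dag F.mul) ≫ (α_ A A A).inv ≫ (F.mul ⊗ₘ 𝟙 A)

/-- A map `z : A ⟶ A` is central for the multiplication `μ`. -/
def Central {A : C} (μ : A ⊗ A ⟶ A) (z : A ⟶ A) : Prop :=
  (z ⊗ₘ 𝟙 A) ≫ μ = μ ≫ z ∧ (𝟙 A ⊗ₘ z) ≫ μ = μ ≫ z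

/-- A positive map: `z = h ≫ h†` for some `h`. -/
def IsPositive {A : C} (z : A ⟶ A) : Prop := ∃ (B : C) (h : A ⟶ B), z = h ≫ dag h

/-- Positive definite: a positive isomorphism. -/
def IsPositiveDefinite {A : C} (z : A ⟶ A) : Prop := IsPositive z ∧ IsIso z

/-- `(A, μ, η)` is a normalisable dagger Frobenius algebra with normaliser `z`:
`z` is central and positive definite and `Tr_A(μ) ∘ z² = η†`. -/
structure IsNormalisable {A : C} (F : FrobeniusData A) (z : A ⟶ A) : Prop where
  isFrobenius : IsFrobenius F
  central : Central F.mul z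
  posdef : IsPositiveDefinite z
  normalised : z ≫ z ≫ rightLoop F.mul = dag F.unit

/-- A dagger Frobenius algebra is symmetric when `η† ∘ μ ∘ σ = η† ∘ μ`. -/
def IsSymmetric {A : C} (F : FrobeniusData A) : Prop :=
  (β_ A A).hom ≫ F.mul ≫ dag F.unit = F.mul ≫ dag F.unit

/-- The middle-four interchange `(P⊗Q)⊗(R⊗S) ⟶ (P⊗R)⊗(Q⊗S)`. -/
def shuffle (P Q R S : C) : (P ⊗ Q) ⊗ (R ⊗ S) ⟶ (P ⊗ R) ⊗ (Q ⊗ S) :=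
  (α_ P Q (R ⊗ S)).hom ≫ (𝟙 P ⊗ₘ (α_ Q R S).inv) ≫ (𝟙 P ⊗ₘ ((β_ Q R).hom ⊗ₘ 𝟙 S)) ≫
    (𝟙 P ⊗ₘ (α_ R Q S).hom) ≫ (α_ P R (Q ⊗ S)).inv

/-- The componentwise (tensor product) algebra structure on `A ⊗ B`. -/
def tensorFrobenius {A B : C} (FA : FrobeniusData A) (FB : FrobeniusData B) :
    FrobeniusData (A ⊗ B) where
  mul := shuffle A B A B ≫ (FA.mul ⊗ₘ FB.mul)
  unit := (λ_ (𝟙_ C)).inv ≫ (FA.unit ⊗ₘ FB.unit)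

/-- The transpose `f* : Y* ⟶ X*` of `f : X ⟶ Y`, via the compact structure. -/
def transpose {X Y : C} (f : X ⟶ Y) : dual Y ⟶ dual X :=
  (ρ_ (dual Y)).inv ≫ (𝟙 (dual Y) ⊗ₘ coev X) ≫ (𝟙 (dual Y) ⊗ₘ (𝟙 (dual X) ⊗ₘ f)) ≫
    (𝟙 (dual Y) ⊗ₘ (β_ (dual X) Y).hom) ≫ (α_ (dual Y) Y (dual X)).inv ≫
    ((β_ (dual Y) Y).hom ⊗ₘ 𝟙 (dual X)) ≫ (ev Y ⊗ₘ 𝟙 (dual X)) ≫ (λ_ (dual X)).hom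

/-- The conjugate `f_* = (f†)* : X* ⟶ Y*` of `f : X ⟶ Y`. -/
def conj {X Y : C} (f : X ⟶ Y) : dual X ⟶ dual Y := dag (transpose f)

/-- The Frobenius cup `Δ ∘ η : I ⟶ A ⊗ A`. -/
def frobCup {A : C} (F : FrobeniusData A) : 𝟙_ C ⟶ A ⊗ A := F.unit ≫ dag F.mul

/-- The Frobenius cap `ε ∘ μ : A ⊗ A ⟶ I`. -/
def frobCap {A : C} (F : FrobeniusData A) : A ⊗ A ⟶ 𝟙_ C := F.mul ≫ dag F.unit

/-- The dualiser `A ⟶ A*` induced by a Frobenius algebra. -/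
def dualiser {A : C} (F : FrobeniusData A) : A ⟶ dual A :=
  (λ_ A).inv ≫ (coev A ⊗ₘ 𝟙 A) ≫ (α_ (dual A) A A).hom ≫ (𝟙 (dual A) ⊗ₘ frobCap F) ≫
    (ρ_ (dual A)).hom

/-- The inverse dualiser `A* ⟶ A` induced by a Frobenius algebra. -/
def dualiserInv {A : C} (F : FrobeniusData A) : dual A ⟶ A :=
  (λ_ (dual A)).inv ≫ (frobCup F ⊗ₘ 𝟙 (dual A)) ≫ (α_ A A (dual A)).hom ≫
    (𝟙 A ⊗ₘ ev A) ≫ (ρ_ A).hom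

/-- The coaction `A* ⊗ A ⟶ A` of a Frobenius algebra: multiplication precomposed with
the dualiser identification on the first (conjugate) leg. -/
def coact {A : C} (F : FrobeniusData A) : dual A ⊗ A ⟶ A :=
  (dualiserInv F ⊗ₘ 𝟙 A) ≫ F.mul

/-- The action `A ⟶ A* ⊗ A` of a Frobenius algebra (the dagger of the coaction). -/
def act {A : C} (F : FrobeniusData A) : A ⟶ dual A ⊗ A := dag (coact F)

/-- The canonical pairing `X* ⊗ X ⟶ I`. -/
def pairDual (X : C) : dual X ⊗ X ⟶ 𝟙_ C := (β_ (dual X) X).hom ≫ ev X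

/-- The pairing `(X* ⊗ B*) ⊗ (X ⊗ B) ⟶ I`. -/
def pair₂ (X B : C) : (dual X ⊗ dual B) ⊗ (X ⊗ B) ⟶ 𝟙_ C :=
  shuffle (dual X) (dual B) X B ≫ (pairDual X ⊗ₘ pairDual B) ≫ (λ_ (𝟙_ C)).hom

/-- The two-legged transpose `X* ⊗ B* ⟶ A*` of a map `g : A ⟶ X ⊗ B`. -/
def transpose₂ {A X B : C} (g : A ⟶ X ⊗ B) : dual X ⊗ dual B ⟶ dual A :=
  (ρ_ (dual X ⊗ dual B)).inv ≫ (𝟙 (dual X ⊗ dual B) ⊗ₘ coev A) ≫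
    (α_ (dual X ⊗ dual B) (dual A) A).inv ≫ ((β_ (dual X ⊗ dual B) (dual A)).hom ⊗ₘ 𝟙 A) ≫
    (α_ (dual A) (dual X ⊗ dual B) A).hom ≫ (𝟙 (dual A) ⊗ₘ (𝟙 (dual X ⊗ dual B) ⊗ₘ g)) ≫
    (𝟙 (dual A) ⊗ₘ pair₂ X B) ≫ (ρ_ (dual A)).hom

/-- The two-legged conjugate `g_* : A* ⟶ X* ⊗ B*` of `g : A ⟶ X ⊗ B`. -/
def conj₂ {A X B : C} (g : A ⟶ X ⊗ B) : dual A ⟶ dual X ⊗ dual B := dag (transpose₂ g)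

/-- The right-hand side of the CP*-condition: `g_* ⊗ g` with the ancilla legs `X`
contracted by the ambient cap. -/
def cpRHS {A B X : C} (g : A ⟶ X ⊗ B) : dual A ⊗ A ⟶ dual B ⊗ B :=
  (conj₂ g ⊗ₘ g) ≫ shuffle (dual X) (dual B) X B ≫ (pairDual X ⊗ₘ 𝟙 (dual B ⊗ B)) ≫
    (λ_ (dual B ⊗ B)).hom

/-- The CP*-condition for `f : A ⟶ B` between Frobenius algebras: there is an ancilla `X`
and a Kraus map `g : A ⟶ X ⊗ B` with `act_B ∘ f ∘ coact_A = g_* ⊗ g` (ancilla contracted). -/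
def CPCondition {A B : C} (FA : FrobeniusData A) (FB : FrobeniusData B) (f : A ⟶ B) : Prop :=
  ∃ (X : C) (g : A ⟶ X ⊗ B), coact FA ≫ f ≫ act FB = cpRHS g

/-- A *-homomorphism between Frobenius algebras: multiplicative, unital, and compatible
with the involutions induced by the Frobenius structures (expressed via the dualisers
and the ambient conjugation). -/
structure IsStarHom {A B : C} (FA : FrobeniusData A) (FB : FrobeniusData B)
    (f : A ⟶ B) : Prop where
  mul_compat : (f ⊗ₘ f) ≫ FB.mul = FA.mul ≫ f
  unit_compat : FA.unit ≫ f = FB.unit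
  star_compat : f ≫ dualiser FB = dualiser FA ≫ conj f

/-- Scalar multiplication of a morphism by a scalar `s : I ⟶ I`. -/
def smulHom {X Y : C} (s : 𝟙_ C ⟶ 𝟙_ C) (f : X ⟶ Y) : X ⟶ Y :=
  (λ_ X).inv ≫ (s ⊗ₘ f) ≫ (λ_ Y).hom

/-- The "pair of pants" algebra structure on `H* ⊗ H`. -/
def pants (H : C) : FrobeniusData (dual H ⊗ H) where
  mul := (α_ (dual H) H (dual H ⊗ H)).hom ≫ (𝟙 (dual H) ⊗ₘ (α_ H (dual H) H).inv) ≫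
    (𝟙 (dual H) ⊗ₘ (ev H ⊗ₘ 𝟙 H)) ≫ (𝟙 (dual H) ⊗ₘ (λ_ H).hom)
  unit := coev H

end DaggerCompactCategory

open DaggerCompactCategory

namespace CategoryTheory

open BraidedCategory

section Mate

variable {C : Type u} [Category.{v} C] [MonoidalCategory C]

def partialRightAdjointMate {X A B : C} [HasRightDual A] [HasRightDual B] (u : X ⊗ A ⟶ B) :
    Bᘁ ⊗ X ⟶ Aᘁ :=
  𝟙 _ ⊗≫ (Bᘁ ⊗ X) ◁ η_ A Aᘁ ⊗≫ Bᘁ ◁ u ▷ Aᘁ ⊗≫ ε_ B Bᘁ ▷ Aᘁ ⊗≫ 𝟙 _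

variable {X A B : C} [HasRightDual A] [HasRightDual B]

theorem coevaluation_comp_partialRightAdjointMate (u : X ⊗ A ⟶ B) :
    𝟙 X ⊗≫ η_ B Bᘁ ▷ X ⊗≫ B ◁ partialRightAdjointMate u =
      𝟙 X ⊗≫ X ◁ η_ A Aᘁ ⊗≫ u ▷ Aᘁ := by
  calc 𝟙 X ⊗≫ η_ B Bᘁ ▷ X ⊗≫ B ◁ partialRightAdjointMate u
      = 𝟙 X ⊗≫ (η_ B Bᘁ ▷ (X ⊗ 𝟙_ C) ≫ (B ⊗ Bᘁ) ◁ (X ◁ η_ A Aᘁ ⊗≫ u ▷ Aᘁ)) ⊗≫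
          B ◁ (ε_ B Bᘁ ▷ Aᘁ) ⊗≫ 𝟙 (B ⊗ Aᘁ) := by
        dsimp [partialRightAdjointMate]; monoidal
    _ = 𝟙 X ⊗≫ (𝟙_ C ◁ (X ◁ η_ A Aᘁ ⊗≫ u ▷ Aᘁ) ≫ η_ B Bᘁ ▷ (B ⊗ Aᘁ)) ⊗≫
          B ◁ (ε_ B Bᘁ ▷ Aᘁ) ⊗≫ 𝟙 (B ⊗ Aᘁ) := by
        rw [← whisker_exchange]
    _ = 𝟙 X ⊗≫ (X ◁ η_ A Aᘁ ⊗≫ u ▷ Aᘁ) ⊗≫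
          ((η_ B Bᘁ ▷ B ≫ (α_ B Bᘁ B).hom ≫ B ◁ ε_ B Bᘁ) ▷ Aᘁ) ⊗≫ 𝟙 (B ⊗ Aᘁ) := by
        monoidal
    _ = 𝟙 X ⊗≫ X ◁ η_ A Aᘁ ⊗≫ u ▷ Aᘁ := by
        rw [ExactPairing.evaluation_coevaluation]; monoidal

theorem partialRightAdjointMate_comp_evaluation (u : X ⊗ A ⟶ B) :
    (α_ Bᘁ X A).inv ≫ partialRightAdjointMate u ▷ A ≫ ε_ A Aᘁ = Bᘁ ◁ u ≫ ε_ B Bᘁ := by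
  calc (α_ Bᘁ X A).inv ≫ partialRightAdjointMate u ▷ A ≫ ε_ A Aᘁ
      = 𝟙 (Bᘁ ⊗ (X ⊗ A)) ⊗≫ ((Bᘁ ⊗ X) ◁ η_ A Aᘁ) ▷ A ⊗≫ (Bᘁ ◁ u) ▷ (Aᘁ ⊗ A) ⊗≫
          (ε_ B Bᘁ ▷ (Aᘁ ⊗ A) ≫ 𝟙_ C ◁ ε_ A Aᘁ) ⊗≫ 𝟙 (𝟙_ C) := by
        dsimp [partialRightAdjointMate]; monoidal
    _ = 𝟙 (Bᘁ ⊗ (X ⊗ A)) ⊗≫ ((Bᘁ ⊗ X) ◁ η_ A Aᘁ) ▷ A ⊗≫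
          ((Bᘁ ◁ u) ▷ (Aᘁ ⊗ A) ≫ (Bᘁ ⊗ B) ◁ ε_ A Aᘁ) ⊗≫ ε_ B Bᘁ ▷ 𝟙_ C ⊗≫ 𝟙 (𝟙_ C) := by
        rw [← whisker_exchange]; monoidal
    _ = 𝟙 (Bᘁ ⊗ (X ⊗ A)) ⊗≫ ((Bᘁ ⊗ X) ◁ η_ A Aᘁ) ▷ A ⊗≫
          ((Bᘁ ⊗ (X ⊗ A) : C) ◁ ε_ A Aᘁ ≫ (Bᘁ ◁ u) ▷ 𝟙_ C) ⊗≫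
          ε_ B Bᘁ ▷ 𝟙_ C ⊗≫ 𝟙 (𝟙_ C) := by
        rw [← whisker_exchange]
    _ = 𝟙 (Bᘁ ⊗ (X ⊗ A)) ⊗≫
          ((Bᘁ ⊗ X : C) ◁ (η_ A Aᘁ ▷ A ≫ (α_ A Aᘁ A).hom ≫ A ◁ ε_ A Aᘁ)) ⊗≫
          (Bᘁ ◁ u ≫ ε_ B Bᘁ) ⊗≫ 𝟙 (𝟙_ C) := by
        monoidal
    _ = Bᘁ ◁ u ≫ ε_ B Bᘁ := by
        rw [ExactPairing.evaluation_coevaluation]; monoidal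

end Mate

section Braided

variable {C : Type u} [Category.{v} C] [MonoidalCategory C] [BraidedCategory C]

def partialTrace {X A : C} [HasRightDual A] (f : X ⊗ A ⟶ A) : X ⟶ 𝟙_ C :=
  (ρ_ X).inv ≫ X ◁ η_ A Aᘁ ≫ (α_ X A Aᘁ).inv ≫ f ▷ Aᘁ ≫ (β_ A Aᘁ).hom ≫ ε_ A Aᘁ

def braidedCoevaluation (X A : C) [HasRightDual A] : X ⟶ Aᘁ ⊗ (X ⊗ A) :=
  (ρ_ X).inv ≫ X ◁ η_ A Aᘁ ≫ (α_ X A Aᘁ).inv ≫ (β_ (X ⊗ A) Aᘁ).hom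

variable {X Y A B : C} [HasRightDual A] [HasRightDual B]

theorem partialTrace_eq_braidedCoevaluation_comp (f : X ⊗ A ⟶ A) :
    partialTrace f = braidedCoevaluation X A ≫ Aᘁ ◁ f ≫ ε_ A Aᘁ := by
  simp [partialTrace, braidedCoevaluation]

theorem comp_partialTrace (g : Y ⟶ X) (f : X ⊗ A ⟶ A) :
    g ≫ partialTrace f = partialTrace (g ▷ A ≫ f) := by
  calc g ≫ partialTrace f
      = 𝟙 Y ⊗≫ (g ▷ 𝟙_ C ≫ X ◁ η_ A Aᘁ) ⊗≫ f ▷ Aᘁ ≫ (β_ A Aᘁ).hom ≫ ε_ A Aᘁ := by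
        dsimp [partialTrace]; monoidal
    _ = 𝟙 Y ⊗≫ (Y ◁ η_ A Aᘁ ≫ g ▷ (A ⊗ Aᘁ)) ⊗≫ f ▷ Aᘁ ≫ (β_ A Aᘁ).hom ≫ ε_ A Aᘁ := by
        rw [← whisker_exchange]
    _ = partialTrace (g ▷ A ≫ f) := by
        dsimp [partialTrace]; monoidal

theorem braidedCoevaluation_tensor :
    braidedCoevaluation (Y ⊗ X) A =
      Y ◁ braidedCoevaluation X A ⊗≫ (β_ Y Aᘁ).hom ▷ (X ⊗ A) ⊗≫ 𝟙 _ := by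
  simp only [braidedCoevaluation, braiding_tensor_left_hom]
  monoidal

theorem partialTrace_comp_eq_braidedCoevaluation (u : X ⊗ B ⟶ A) (v : Y ⊗ A ⟶ B) :
    partialTrace ((α_ X Y A).hom ≫ X ◁ v ≫ u) =
      braidedCoevaluation X B ▷ Y ⊗≫ Bᘁ ◁ ((β_ (X ⊗ B) Y).hom ≫ Y ◁ u ≫ v) ≫ ε_ B Bᘁ := by
  calc partialTrace ((α_ X Y A).hom ≫ X ◁ v ≫ u)
      = 𝟙 _ ⊗≫ X ◁ (𝟙 Y ⊗≫ Y ◁ η_ A Aᘁ ⊗≫ v ▷ Aᘁ) ⊗≫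
          u ▷ Aᘁ ≫ (β_ A Aᘁ).hom ≫ ε_ A Aᘁ := by
        dsimp [partialTrace]; monoidal
    _ = 𝟙 _ ⊗≫ X ◁ (𝟙 Y ⊗≫ η_ B Bᘁ ▷ Y ⊗≫ B ◁ partialRightAdjointMate v) ⊗≫
          u ▷ Aᘁ ≫ (β_ A Aᘁ).hom ≫ ε_ A Aᘁ := by
        rw [coevaluation_comp_partialRightAdjointMate]
    _ = 𝟙 _ ⊗≫ (X ◁ η_ B Bᘁ) ▷ Y ⊗≫ (X ⊗ B) ◁ partialRightAdjointMate v ⊗≫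
          ((β_ (X ⊗ B) Aᘁ).hom ≫ Aᘁ ◁ u) ≫ ε_ A Aᘁ := by
        rw [← braiding_naturality_left]; monoidal
    _ = 𝟙 _ ⊗≫ (X ◁ η_ B Bᘁ) ▷ Y ⊗≫
          ((X ⊗ B) ◁ partialRightAdjointMate v ≫ (β_ (X ⊗ B) Aᘁ).hom) ⊗≫
          Aᘁ ◁ u ≫ ε_ A Aᘁ := by
        monoidal
    _ = 𝟙 _ ⊗≫ (X ◁ η_ B Bᘁ) ▷ Y ⊗≫
          ((β_ (X ⊗ B) (Bᘁ ⊗ Y)).hom ≫ partialRightAdjointMate v ▷ (X ⊗ B)) ⊗≫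
          Aᘁ ◁ u ≫ ε_ A Aᘁ := by
        rw [braiding_naturality_right]
    _ = braidedCoevaluation X B ▷ Y ⊗≫ Bᘁ ◁ (β_ (X ⊗ B) Y).hom ⊗≫
          (partialRightAdjointMate v ▷ (X ⊗ B) ≫ Aᘁ ◁ u) ≫ ε_ A Aᘁ := by
        rw [braiding_tensor_right_hom]
        dsimp [braidedCoevaluation]; monoidal
    _ = braidedCoevaluation X B ▷ Y ⊗≫ Bᘁ ◁ ((β_ (X ⊗ B) Y).hom ≫ Y ◁ u) ⊗≫
          Bᘁ ◁ v ≫ ε_ B Bᘁ := by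
        rw [← whisker_exchange, ← partialRightAdjointMate_comp_evaluation]; monoidal
    _ = _ := by monoidal

end Braided

section Symmetric

variable {C : Type u} [Category.{v} C] [MonoidalCategory C] [SymmetricCategory C]

theorem whiskerRight_comp_whiskerLeft_braiding {X Y Q W : C} (g : X ⟶ Q ⊗ W) :
    g ▷ Y ⊗≫ Q ◁ (β_ W Y).hom =
      (β_ X Y).hom ≫ Y ◁ g ⊗≫ (β_ Y Q).hom ▷ W ⊗≫ 𝟙 _ := by
  calc g ▷ Y ⊗≫ Q ◁ (β_ W Y).hom
      = g ▷ Y ⊗≫ Q ◁ (β_ W Y).hom ⊗≫ ((β_ Q Y).hom ▷ W ≫ (β_ Y Q).hom ▷ W) ⊗≫ 𝟙 _ := by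
        rw [← comp_whiskerRight, SymmetricCategory.symmetry, id_whiskerRight]; monoidal
    _ = (g ▷ Y ≫ (β_ (Q ⊗ W) Y).hom) ⊗≫ (β_ Y Q).hom ▷ W ⊗≫ 𝟙 _ := by
        rw [braiding_tensor_left_hom]; monoidal
    _ = (β_ X Y).hom ≫ Y ◁ g ⊗≫ (β_ Y Q).hom ▷ W ⊗≫ 𝟙 _ := by
        rw [braiding_naturality_left]; monoidal

theorem partialTrace_comp_comm {X Y A B : C} [HasRightDual A] [HasRightDual B]
    (u : X ⊗ B ⟶ A) (v : Y ⊗ A ⟶ B) :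
    partialTrace ((α_ X Y A).hom ≫ X ◁ v ≫ u) =
      (β_ X Y).hom ≫ partialTrace ((α_ Y X B).hom ≫ Y ◁ u ≫ v) := by
  rw [partialTrace_comp_eq_braidedCoevaluation, partialTrace_eq_braidedCoevaluation_comp,
    braidedCoevaluation_tensor]
  calc braidedCoevaluation X B ▷ Y ⊗≫ Bᘁ ◁ ((β_ (X ⊗ B) Y).hom ≫ Y ◁ u ≫ v) ≫ ε_ B Bᘁ
      = (braidedCoevaluation X B ▷ Y ⊗≫ Bᘁ ◁ (β_ (X ⊗ B) Y).hom) ⊗≫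
          Bᘁ ◁ (Y ◁ u ≫ v) ≫ ε_ B Bᘁ := by
        monoidal
    _ = ((β_ X Y).hom ≫ Y ◁ braidedCoevaluation X B ⊗≫ (β_ Y Bᘁ).hom ▷ (X ⊗ B) ⊗≫ 𝟙 _) ⊗≫
          (Bᘁ : C) ◁ (Y ◁ u ≫ v) ≫ ε_ B Bᘁ := by
        rw [whiskerRight_comp_whiskerLeft_braiding]
    _ = _ := by monoidal

theorem braiding_comp_mul_comp_partialTrace {A : C} [HasRightDual A] {μ : A ⊗ A ⟶ A}
    (hassoc : μ ▷ A ≫ μ = (α_ A A A).hom ≫ A ◁ μ ≫ μ) :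
    (β_ A A).hom ≫ μ ≫ partialTrace μ = μ ≫ partialTrace μ := by
  rw [comp_partialTrace, hassoc]
  exact (partialTrace_comp_comm μ μ).symm

end Symmetric

end CategoryTheory

namespace DaggerCompactCategory

variable {C : Type u} [Category.{v} C] [MonoidalCategory C]

theorem Central.tensorHom_comp_mul {A : C} {μ : A ⊗ A ⟶ A} {z : A ⟶ A} (hz : Central μ z) :
    (z ⊗ₘ z) ≫ μ = μ ≫ z ≫ z := by
  rw [← id_tensor_comp_tensor_id, Category.assoc, hz.1, ← Category.assoc, hz.2, Category.assoc]

variable [SymmetricCategory C] [DaggerCompactCategory C]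

instance exactPairing (A : C) : ExactPairing (dual A) A where
  coevaluation' := coev A
  evaluation' := ev A
  coevaluation_evaluation' := by
    rw [← cancel_epi (ρ_ A).inv, ← cancel_mono (λ_ A).hom]
    simpa using snake₁ A
  evaluation_coevaluation' := by
    rw [← cancel_epi (λ_ (dual A)).inv, ← cancel_mono (ρ_ (dual A)).hom]
    simpa using snake₂ A

instance hasLeftDual (A : C) : HasLeftDual A := ⟨dual A⟩

instance hasRightDual (A : C) : HasRightDual A := BraidedCategory.hasRightDualOfHasLeftDual

theorem rightLoop_eq_partialTrace {A : C} (μ : A ⊗ A ⟶ A) : rightLoop μ = partialTrace μ := by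
  have hη : η_ A Aᘁ = coev A ≫ (β_ (dual A) A).hom := by
    rw [SymmetricCategory.braiding_swap_eq_inv_braiding]; rfl
  have hε : (β_ A Aᘁ).hom ≫ ε_ A Aᘁ = ev A := SymmetricCategory.symmetry_assoc _ _ _
  simp only [rightLoop, partialTrace, hη, hε, id_tensorHom, tensorHom_id, whiskerLeft_comp,
    Category.assoc]
  rfl

end DaggerCompactCategory

/-- every normalisable dagger Frobenius algebra in a dagger compact
category is symmetric. -/
theorem normalisable_implies_symmetric {C : Type u} [Category.{v} C] [MonoidalCategory C]
    [SymmetricCategory C] [DaggerCompactCategory C] {A : C} (F : FrobeniusData A)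
    (z : A ⟶ A) (h : IsNormalisable F z) : IsSymmetric F := by
  obtain ⟨hF, hz, -, hnorm⟩ := h
  have hτ : (β_ A A).hom ≫ F.mul ≫ partialTrace F.mul = F.mul ≫ partialTrace F.mul :=
    braiding_comp_mul_comp_partialTrace (by simpa using hF.assoc)
  rw [IsSymmetric, ← hnorm, rightLoop_eq_partialTrace]
  calc (β_ A A).hom ≫ F.mul ≫ z ≫ z ≫ partialTrace F.mul
      = (z ⊗ₘ z) ≫ (β_ A A).hom ≫ F.mul ≫ partialTrace F.mul := by
        rw [BraidedCategory.braiding_naturality_assoc, reassoc_of% hz.tensorHom_comp_mul]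
    _ = F.mul ≫ z ≫ z ≫ partialTrace F.mul := by
        rw [hτ, reassoc_of% hz.tensorHom_comp_mul]
end

section
/- Normalisable dagger Frobenius algebras in the category Rel of sets and relations are exactly special: normalisability implies μ∘μ† = id. -/
/-!  Frobenius algebras in the dagger compact category `Rel` of sets and relations,
written out pointwise.  A relation `A ⊸ B` is a function `A → B → Prop`; composition,
converse (the dagger) and cartesian product are the usual ones. -/

/-- `(A, mul, unit)` is a dagger Frobenius algebra in `Rel`: associativity, unitality
and the Frobenius law `Δ∘μ = (μ⊗id)∘(id⊗Δ)` with `Δ = μ†` the relational converse,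
written pointwise. -/
structure IsRelFrobenius {A : Type*} (mul : A × A → A → Prop)
    (unit : Unit → A → Prop) : Prop where
  assoc : ∀ a b c d : A,
    (∃ x, mul (a, b) x ∧ mul (x, c) d) ↔ (∃ y, mul (b, c) y ∧ mul (a, y) d)
  unit_left : ∀ a b : A, (∃ e, unit () e ∧ mul (e, a) b) ↔ a = b
  unit_right : ∀ a b : A, (∃ e, unit () e ∧ mul (a, e) b) ↔ a = b
  frobenius : ∀ a b c d : A,
    (∃ m, mul (a, b) m ∧ mul (c, d) m) ↔ (∃ x, mul (x, d) b ∧ mul (a, x) c)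

/-- Centrality of `z` for `mul`, in `Rel`: `μ∘(z⊗id) = z∘μ = μ∘(id⊗z)`. -/
def RelCentral {A : Type*} (mul : A × A → A → Prop) (z : A → A → Prop) : Prop :=
  (∀ a b c, (∃ a', z a a' ∧ mul (a', b) c) ↔ (∃ m, mul (a, b) m ∧ z m c)) ∧
  (∀ a b c, (∃ b', z b b' ∧ mul (a, b') c) ↔ (∃ m, mul (a, b) m ∧ z m c))

/-- Positivity in `Rel`: `z = h† ∘ h` for some relation `h`. -/
def RelPositive {A : Type*} (z : A → A → Prop) : Prop :=
  ∃ (B : Type) (h : A → B → Prop), ∀ a a', z a a' ↔ ∃ b, h a b ∧ h a' b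

/-- Invertibility in `Rel`. -/
def RelInvertible {A : Type*} (z : A → A → Prop) : Prop :=
  ∃ w : A → A → Prop, (∀ a a', (∃ x, z a x ∧ w x a') ↔ a = a') ∧
    (∀ a a', (∃ x, w a x ∧ z x a') ↔ a = a')

/-- A normalisable dagger Frobenius algebra in `Rel`: a dagger Frobenius algebra with a
central positive-definite `z` such that `Tr_A(μ) ∘ z² = η†`, where the loop
`Tr_A(μ)` relates `a` to `()` iff `∃ b, mul (a,b) b`. -/
structure IsRelNormalisable {A : Type*} (mul : A × A → A → Prop)
    (unit : Unit → A → Prop) (z : A → A → Prop) : Prop where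
  isFrobenius : IsRelFrobenius mul unit
  central : RelCentral mul z
  positive : RelPositive z
  iso : RelInvertible z
  normalised : ∀ a : A,
    (∃ a'', (∃ a', z a a' ∧ z a' a'') ∧ ∃ b, mul (a'', b) b) ↔ unit () a

/-! In `Rel` a positive `z = h†∘h` relates `a` to itself as soon as it relates `a` to
anything, and an invertible `z` is total; so `z² ⊇ id` and normalisation forces every loop
`a·b ∋ b` to have `a` a unit. Given this, the Frobenius law makes `μ` right cancellative:
from `x·y ∋ c` one finds a loop `t·y ∋ y` and then `u` with `y·u ∋ t`, so that `c·u ∋ x`,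
and two outputs `c, c'` of the same product `x·y` are identified by cancelling `u`. -/

section

variable {A : Type*} {mul : A × A → A → Prop} {unit : Unit → A → Prop}

theorem RelPositive.rel_self_of_rel {z : A → A → Prop} (hz : RelPositive z) {a a' : A}
    (h : z a a') : z a a := by
  obtain ⟨B, g, hg⟩ := hz
  obtain ⟨b, hab, -⟩ := (hg a a').mp h
  exact (hg a a).mpr ⟨b, hab, hab⟩

theorem RelInvertible.exists_rel {z : A → A → Prop} (hz : RelInvertible z) (a : A) :
    ∃ a', z a a' := by
  obtain ⟨w, hzw, -⟩ := hz
  obtain ⟨a', h, -⟩ := (hzw a a).mpr rfl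
  exact ⟨a', h⟩

theorem IsRelNormalisable.trace_le_counit {z : A → A → Prop}
    (h : IsRelNormalisable mul unit z) {t b : A} (htb : mul (t, b) b) : unit () t := by
  obtain ⟨_, ht⟩ := h.iso.exists_rel t
  have htt : z t t := h.positive.rel_self_of_rel ht
  exact (h.normalised t).mp ⟨t, ⟨t, htt, htt⟩, b, htb⟩

namespace IsRelFrobenius

theorem exists_mul_self_of_mul (hF : IsRelFrobenius mul unit) {x y c : A}
    (h : mul (x, y) c) : ∃ t, mul (t, y) y := by
  obtain ⟨t, hty, -⟩ := (hF.frobenius x y x y).mp ⟨c, h, h⟩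
  exact ⟨t, hty⟩

theorem exists_mul_of_mul_self (hF : IsRelFrobenius mul unit) {t y : A}
    (hty : mul (t, y) y) : ∃ u, mul (y, u) t := by
  obtain ⟨e, he, hye⟩ := (hF.unit_right y y).mpr rfl
  obtain ⟨u, -, hyu⟩ := (hF.frobenius y e t y).mp ⟨y, hye, hty⟩
  exact ⟨u, hyu⟩

theorem mul_mul_of_mul_unit (hF : IsRelFrobenius mul unit) {x y u t c : A}
    (ht : unit () t) (hyu : mul (y, u) t) (hxy : mul (x, y) c) : mul (c, u) x := by
  obtain ⟨m, hxm, hcum⟩ := (hF.frobenius x t c u).mpr ⟨y, hyu, hxy⟩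
  obtain rfl : x = m := (hF.unit_right x m).mp ⟨t, ht, hxm⟩
  exact hcum

theorem eq_of_mul_right (hF : IsRelFrobenius mul unit)
    (htrace : ∀ t b, mul (t, b) b → unit () t) {a a' u x : A} (ha : mul (a, u) x)
    (ha' : mul (a', u) x) : a = a' := by
  obtain ⟨v, hvu, hav⟩ := (hF.frobenius a u a' u).mp ⟨x, ha, ha'⟩
  exact (hF.unit_right a a').mp ⟨v, htrace v u hvu, hav⟩

theorem special_of_trace_le_counit (hF : IsRelFrobenius mul unit)
    (htrace : ∀ t b, mul (t, b) b → unit () t) (a a' : A) :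
    (∃ p : A × A, mul p a ∧ mul p a') ↔ a = a' := by
  constructor
  · rintro ⟨⟨x, y⟩, ha, ha'⟩
    obtain ⟨t, hty⟩ := hF.exists_mul_self_of_mul ha
    obtain ⟨u, hyu⟩ := hF.exists_mul_of_mul_self hty
    have ht : unit () t := htrace t y hty
    exact hF.eq_of_mul_right htrace (hF.mul_mul_of_mul_unit ht hyu ha)
      (hF.mul_mul_of_mul_unit ht hyu ha')
  · rintro rfl
    obtain ⟨e, -, hea⟩ := (hF.unit_left a a).mpr rfl
    exact ⟨(e, a), hea, hea⟩

end IsRelFrobenius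

end

/-- normalisable dagger Frobenius algebras in `Rel` are special:
`μ ∘ μ† = id`. -/
theorem rel_normalisable_special {A : Type*} (mul : A × A → A → Prop)
    (unit : Unit → A → Prop) (z : A → A → Prop)
    (h : IsRelNormalisable mul unit z) :
    ∀ a a' : A, (∃ p : A × A, mul p a ∧ mul p a') ↔ a = a' :=
  h.isFrobenius.special_of_trace_le_counit fun _ _ => h.trace_le_counit
end

section
/- Normalisable dagger Frobenius algebras in Rel are in one-to-one correspondence with groupoids: the set of morphisms of a groupoid G with the composition relation μ = {((g,f), g∘f) : f,g composable} and unit relation η = {(*, id_a) : a ∈ Ob(G)} forms a normalisable dagger Frobenius algebra, and every such algebra arises this way. -/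
open CategoryTheory

/-- The set of morphisms of a groupoid. -/
abbrev Mor (G : Type) [Groupoid G] : Type := Σ (a b : G), a ⟶ b

/-- The composition relation of a groupoid, as a relation in `Rel`. -/
def gMul (G : Type) [Groupoid G] : Mor G × Mor G → Mor G → Prop := fun p k =>
  ∃ (a b c : G) (f : a ⟶ b) (g : b ⟶ c),
    p.1 = ⟨a, b, f⟩ ∧ p.2 = ⟨b, c, g⟩ ∧ k = ⟨a, c, f ≫ g⟩

/-- The unit relation of a groupoid: it relates `()` to the identities. -/
def gUnit (G : Type) [Groupoid G] : Unit → Mor G → Prop := fun _ k =>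
  ∃ a : G, k = ⟨a, a, 𝟙 a⟩

/-- The identity morphism at `a`, as an element of `Mor G`. -/
def gId (G : Type) [Groupoid G] (a : G) : Mor G := ⟨a, a, 𝟙 a⟩

/-!
A positive invertible relation is the identity, so a normaliser must be `z = id` and
normalisability says that the units are exactly the `a` with `a b = b` for some `b`.
In a groupoid this holds because `f ≫ g = g` forces `f = 𝟙`.

Conversely, the units of such an algebra are the objects, and the elements with left unit
`e` and right unit `e'` the morphisms `e ⟶ e'`. The Frobenius law produces composites of
composable elements and inverses, and together with the normalisation condition it makes
the multiplication single-valued, which yields the groupoid laws.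
-/

/-- `Tr_A(μ) = η†`: the normalisation condition for the normaliser `z = id`. -/
structure IsRelNormalisedFrobenius {A : Type*} (mul : A × A → A → Prop)
    (unit : Unit → A → Prop) : Prop extends IsRelFrobenius mul unit where
  unit_iff : ∀ a, unit () a ↔ ∃ b, mul (a, b) b

theorem RelPositive.eq_eq_of_relInvertible {A : Type*} {z : A → A → Prop} (hp : RelPositive z)
    (hi : RelInvertible z) : z = Eq := by
  obtain ⟨_, _, hz⟩ := hp
  obtain ⟨w, hzw, hwz⟩ := hi
  have refl_of_rel {a a'} (ha : z a a') : z a a := by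
    obtain ⟨b, hb, -⟩ := (hz a a').mp ha
    exact (hz a a).mpr ⟨b, hb, hb⟩
  ext a a'
  obtain ⟨x, hax, hxa⟩ := (hzw a a).mpr rfl
  refine ⟨fun haa' => ?_, fun h => h ▸ refl_of_rel hax⟩
  calc a = x := ((hwz x a).mp ⟨a, hxa, refl_of_rel hax⟩).symm
    _ = a' := (hwz x a').mp ⟨a, hxa, haa'⟩

theorem isRelNormalisable_iff {A : Type} {mul : A × A → A → Prop} {unit : Unit → A → Prop}
    {z : A → A → Prop} :
    IsRelNormalisable mul unit z ↔ z = Eq ∧ IsRelNormalisedFrobenius mul unit := by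
  constructor
  · intro hz
    obtain rfl := hz.positive.eq_eq_of_relInvertible hz.iso
    refine ⟨rfl, hz.isFrobenius, fun a => ?_⟩
    simpa using (hz.normalised a).symm
  · rintro ⟨rfl, hn⟩
    refine ⟨hn.toIsRelFrobenius, by simp [RelCentral], ⟨A, Eq, fun _ _ => by simp [eq_comm]⟩,
      ⟨Eq, by simp, by simp⟩, ?_⟩
    simpa using fun a => (hn.unit_iff a).symm

section Groupoid

variable {G : Type} [Groupoid G]

theorem gMul_mk {a b c : G} {f : a ⟶ b} {g : b ⟶ c} {h : a ⟶ c} (w : f ≫ g = h) :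
    gMul G (⟨a, b, f⟩, ⟨b, c, g⟩) ⟨a, c, h⟩ :=
  ⟨a, b, c, f, g, rfl, rfl, by rw [w]⟩

theorem isRelFrobenius_gMul : IsRelFrobenius (gMul G) (gUnit G) where
  assoc a b c d := by
    constructor
    · rintro ⟨x, ⟨_, _, _, f, g, rfl, rfl, rfl⟩, ⟨_, _, _, _, h, ⟨⟩, rfl, rfl⟩⟩
      exact ⟨_, gMul_mk rfl, gMul_mk (Category.assoc f g h).symm⟩
    · rintro ⟨y, ⟨_, _, _, g, h, rfl, rfl, rfl⟩, ⟨_, _, _, f, _, rfl, ⟨⟩, rfl⟩⟩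
      exact ⟨_, gMul_mk rfl, gMul_mk (Category.assoc f g h)⟩
  unit_left a b := by
    constructor
    · rintro ⟨e, ⟨o, rfl⟩, ⟨_, _, _, _, g, ⟨⟩, rfl, rfl⟩⟩
      simp
    · rintro rfl
      exact ⟨_, ⟨a.1, rfl⟩, gMul_mk (Category.id_comp a.2.2)⟩
  unit_right a b := by
    constructor
    · rintro ⟨e, ⟨o, rfl⟩, ⟨_, _, _, f, _, rfl, ⟨⟩, rfl⟩⟩
      simp
    · rintro rfl
      exact ⟨_, ⟨a.2.1, rfl⟩, gMul_mk (Category.comp_id a.2.2)⟩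
  frobenius a b c d := by
    constructor
    · rintro ⟨m, ⟨_, _, _, f, g, rfl, rfl, rfl⟩, ⟨_, _, _, f', g', rfl, rfl, hm⟩⟩
      obtain ⟨rfl, hm⟩ := Sigma.mk.inj hm
      obtain ⟨rfl, hm⟩ := Sigma.mk.inj (eq_of_heq hm)
      refine ⟨_, gMul_mk (h := g) ?_, gMul_mk (f := f) (g := Groupoid.inv f ≫ f') (by simp)⟩
      simp [eq_of_heq hm]
    · rintro ⟨x, ⟨_, _, _, h, g, rfl, rfl, rfl⟩, ⟨_, _, _, f, _, rfl, ⟨⟩, rfl⟩⟩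
      exact ⟨_, gMul_mk rfl, gMul_mk (Category.assoc f h g)⟩

theorem gUnit_iff_exists_gMul (a : Mor G) : gUnit G () a ↔ ∃ b, gMul G (a, b) b := by
  constructor
  · rintro ⟨o, rfl⟩
    exact ⟨_, gMul_mk (Category.id_comp (𝟙 o))⟩
  · rintro ⟨b, _, _, _, f, g, rfl, rfl, hb⟩
    obtain ⟨rfl, hb⟩ := Sigma.mk.inj hb
    obtain ⟨-, hb⟩ := Sigma.mk.inj (eq_of_heq hb)
    have hf : 𝟙 _ = f := by simpa using congrArg (· ≫ Groupoid.inv g) (eq_of_heq hb)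
    exact ⟨_, by rw [← hf]⟩

theorem isRelNormalisedFrobenius_gMul : IsRelNormalisedFrobenius (gMul G) (gUnit G) :=
  { isRelFrobenius_gMul with unit_iff := gUnit_iff_exists_gMul }

end Groupoid

def UnitHom {A : Type*} (mul : A × A → A → Prop) {unit : Unit → A → Prop}
    (e e' : {e : A // unit () e}) : Type _ :=
  {a : A // mul (e.1, a) a ∧ mul (a, e'.1) a}

namespace IsRelNormalisedFrobenius

section

variable {A : Type*} {mul : A × A → A → Prop} {unit : Unit → A → Prop} {a b c d e e' : A}

theorem eq_of_unit_mul (hn : IsRelNormalisedFrobenius mul unit) (he : unit () e)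
    (h : mul (e, a) b) : a = b :=
  (hn.unit_left a b).mp ⟨e, he, h⟩

theorem eq_of_mul_unit (hn : IsRelNormalisedFrobenius mul unit) (he : unit () e)
    (h : mul (a, e) b) : a = b :=
  (hn.unit_right a b).mp ⟨e, he, h⟩

theorem exists_unit_mul_self (hn : IsRelNormalisedFrobenius mul unit) (a : A) :
    ∃ e, unit () e ∧ mul (e, a) a :=
  (hn.unit_left a a).mpr rfl

theorem exists_mul_unit_self (hn : IsRelNormalisedFrobenius mul unit) (a : A) :
    ∃ e, unit () e ∧ mul (a, e) a :=
  (hn.unit_right a a).mpr rfl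

theorem mul_self_of_unit (hn : IsRelNormalisedFrobenius mul unit) (he : unit () e) :
    mul (e, e) e := by
  obtain ⟨d, -, hed⟩ := hn.exists_mul_unit_self e
  obtain rfl := hn.eq_of_unit_mul he hed
  exact hed

theorem unit_mul_self_of_mul (hn : IsRelNormalisedFrobenius mul unit) (he : unit () e)
    (hea : mul (e, a) a) (h : mul (a, b) c) : mul (e, c) c := by
  obtain ⟨y, -, hey⟩ := (hn.assoc e a b c).mp ⟨a, hea, h⟩
  obtain rfl := hn.eq_of_unit_mul he hey
  exact hey

theorem mul_unit_self_of_mul (hn : IsRelNormalisedFrobenius mul unit) (he : unit () e)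
    (hbe : mul (b, e) b) (h : mul (a, b) c) : mul (c, e) c := by
  obtain ⟨x, -, hxe⟩ := (hn.assoc a b e c).mpr ⟨b, hbe, h⟩
  obtain rfl := (hn.eq_of_mul_unit he hxe).symm
  exact hxe

theorem unit_mul_self_of_mul_unit_self (hn : IsRelNormalisedFrobenius mul unit)
    (he : unit () e) (hae : mul (a, e) a) (h : mul (a, b) c) : mul (e, b) b := by
  obtain ⟨y, hey, -⟩ := (hn.assoc a e b c).mp ⟨a, hae, h⟩
  obtain rfl := (hn.eq_of_unit_mul he hey).symm
  exact hey

theorem mul_unit_self_of_unit_mul_self (hn : IsRelNormalisedFrobenius mul unit)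
    (he : unit () e) (heb : mul (e, b) b) (h : mul (a, b) c) : mul (a, e) a := by
  obtain ⟨x, hae, -⟩ := (hn.assoc a e b c).mpr ⟨b, heb, h⟩
  obtain rfl := (hn.eq_of_mul_unit he hae).symm
  exact hae

theorem unit_mul_self_unique (hn : IsRelNormalisedFrobenius mul unit) (he : unit () e)
    (he' : unit () e') (hea : mul (e, a) a) (he'a : mul (e', a) a) : e = e' := by
  obtain ⟨x, -, hex⟩ := (hn.frobenius e a e' a).mp ⟨a, hea, he'a⟩
  obtain rfl := (hn.eq_of_unit_mul he hex).symm
  exact hn.eq_of_mul_unit he' hex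

theorem mul_unit_self_unique (hn : IsRelNormalisedFrobenius mul unit) (he : unit () e)
    (he' : unit () e') (hae : mul (a, e) a) (hae' : mul (a, e') a) : e = e' := by
  obtain ⟨x, hxe', -⟩ := (hn.frobenius a e a e').mp ⟨a, hae, hae'⟩
  obtain rfl := (hn.eq_of_mul_unit he' hxe').symm
  exact (hn.eq_of_unit_mul he hxe').symm

/-- The special case of `mul_unique` that needs the normalisation condition `unit_iff`. -/
theorem eq_of_mul_of_mul_unit (hn : IsRelNormalisedFrobenius mul unit) (he : unit () e)
    (h : mul (a, b) e) (h' : mul (a, b) c) : c = e := by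
  obtain ⟨d, hd, hbd⟩ := hn.exists_mul_unit_self b
  obtain rfl := (hn.eq_of_unit_mul he (hn.mul_unit_self_of_mul hd hbd h)).symm
  have hce : mul (c, e) c := hn.mul_unit_self_of_mul hd hbd h'
  obtain ⟨x, hxb, hcx⟩ := (hn.frobenius c e a b).mp ⟨c, hce, h'⟩
  obtain ⟨v, hvb, hav⟩ := (hn.frobenius a b x b).mp ⟨e, h, hxb⟩
  obtain rfl := hn.eq_of_mul_unit ((hn.unit_iff v).mpr ⟨b, hvb⟩) hav
  exact (hn.eq_of_unit_mul ((hn.unit_iff c).mpr ⟨a, hcx⟩) hce).symm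

theorem mul_unique (hn : IsRelNormalisedFrobenius mul unit) (h : mul (a, b) c)
    (h' : mul (a, b) d) : c = d := by
  obtain ⟨e, he, hea⟩ := hn.exists_unit_mul_self a
  obtain ⟨x, hxc, hax⟩ := (hn.frobenius a b e c).mp ⟨c, h, hn.unit_mul_self_of_mul he hea h⟩
  obtain ⟨x', hx'd, hax'⟩ :=
    (hn.frobenius a b e d).mp ⟨d, h', hn.unit_mul_self_of_mul he hea h'⟩
  obtain ⟨v, hvd, hxv⟩ := (hn.frobenius x c x' d).mp ⟨b, hxc, hx'd⟩
  obtain ⟨t, hat, hte⟩ := (hn.assoc a x v e).mpr ⟨x', hxv, hax'⟩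
  obtain rfl := hn.eq_of_mul_of_mul_unit he hax hat
  obtain rfl := (hn.eq_of_unit_mul he hte).symm
  exact (hn.eq_of_unit_mul he hvd).symm

theorem exists_mul (hn : IsRelNormalisedFrobenius mul unit) (hae : mul (a, e) a)
    (heb : mul (e, b) b) : ∃ c, mul (a, b) c := by
  obtain ⟨c, hc, -⟩ := (hn.frobenius a b a b).mpr ⟨e, heb, hae⟩
  exact ⟨c, hc⟩

theorem exists_inverse (hn : IsRelNormalisedFrobenius mul unit) (hea : mul (e, a) a)
    (hae' : mul (a, e') a) : ∃ x, mul (a, x) e ∧ mul (x, a) e' := by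
  obtain ⟨x, hxa, hax⟩ := (hn.frobenius a e' e a).mp ⟨a, hae', hea⟩
  exact ⟨x, hax, hxa⟩

end

section

variable {A : Type*} {mul : A × A → A → Prop} {unit : Unit → A → Prop}
  {e e' e'' : {e : A // unit () e}}

theorem exists_comp_unitHom (hn : IsRelNormalisedFrobenius mul unit) (f : UnitHom mul e e')
    (g : UnitHom mul e' e'') : ∃ h : UnitHom mul e e'', mul (f.1, g.1) h.1 := by
  obtain ⟨c, hc⟩ := hn.exists_mul f.2.2 g.2.1
  exact ⟨⟨c, hn.unit_mul_self_of_mul e.2 f.2.1 hc, hn.mul_unit_self_of_mul e''.2 g.2.2 hc⟩,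
    hc⟩

theorem exists_inv_unitHom (hn : IsRelNormalisedFrobenius mul unit) (f : UnitHom mul e e') :
    ∃ g : UnitHom mul e' e, mul (f.1, g.1) e.1 ∧ mul (g.1, f.1) e'.1 := by
  obtain ⟨x, hfx, hxf⟩ := hn.exists_inverse f.2.1 f.2.2
  exact ⟨⟨x, hn.unit_mul_self_of_mul_unit_self e'.2 f.2.2 hfx,
    hn.mul_unit_self_of_unit_mul_self e.2 f.2.1 hxf⟩, hfx, hxf⟩

def idUnitHom (hn : IsRelNormalisedFrobenius mul unit) (e : {e : A // unit () e}) :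
    UnitHom mul e e :=
  ⟨e.1, hn.mul_self_of_unit e.2, hn.mul_self_of_unit e.2⟩

@[reducible] noncomputable def groupoid (hn : IsRelNormalisedFrobenius mul unit) :
    Groupoid {e : A // unit () e} where
  Hom := UnitHom mul
  id := hn.idUnitHom
  comp f g := (hn.exists_comp_unitHom f g).choose
  id_comp {e _} f := Subtype.ext <|
    (hn.eq_of_unit_mul e.2 (hn.exists_comp_unitHom (hn.idUnitHom e) f).choose_spec).symm
  comp_id {_ e'} f := Subtype.ext <|
    (hn.eq_of_mul_unit e'.2 (hn.exists_comp_unitHom f (hn.idUnitHom e')).choose_spec).symm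
  assoc f g h := by
    apply Subtype.ext
    obtain ⟨y, hgh, hfy⟩ := (hn.assoc f.1 g.1 h.1 _).mp
      ⟨_, (hn.exists_comp_unitHom f g).choose_spec, (hn.exists_comp_unitHom _ h).choose_spec⟩
    obtain rfl := hn.mul_unique (hn.exists_comp_unitHom g h).choose_spec hgh
    exact hn.mul_unique hfy (hn.exists_comp_unitHom f _).choose_spec
  inv f := (hn.exists_inv_unitHom f).choose
  inv_comp f := Subtype.ext <| hn.mul_unique (hn.exists_comp_unitHom _ f).choose_spec
    (hn.exists_inv_unitHom f).choose_spec.2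
  comp_inv f := Subtype.ext <| hn.mul_unique (hn.exists_comp_unitHom f _).choose_spec
    (hn.exists_inv_unitHom f).choose_spec.1

end

section

variable {A : Type} {mul : A × A → A → Prop} {unit : Unit → A → Prop}

theorem bijective_morVal (hn : IsRelNormalisedFrobenius mul unit) :
    Function.Bijective fun m : @Mor _ hn.groupoid => m.2.2.1 := by
  constructor
  · rintro ⟨e₁, e₂, f⟩ ⟨e₁', e₂', f'⟩ (h : f.1 = f'.1)
    obtain rfl : e₁ = e₁' :=
      Subtype.ext <| hn.unit_mul_self_unique e₁.2 e₁'.2 f.2.1 (h ▸ f'.2.1)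
    obtain rfl : e₂ = e₂' :=
      Subtype.ext <| hn.mul_unit_self_unique e₂.2 e₂'.2 f.2.2 (h ▸ f'.2.2)
    obtain rfl : f = f' := Subtype.ext h
    rfl
  · intro a
    obtain ⟨e, he, hea⟩ := hn.exists_unit_mul_self a
    obtain ⟨e', he', hae'⟩ := hn.exists_mul_unit_self a
    exact ⟨⟨⟨e, he⟩, ⟨e', he'⟩, ⟨a, hea, hae'⟩⟩, rfl⟩

noncomputable def morEquiv (hn : IsRelNormalisedFrobenius mul unit) : @Mor _ hn.groupoid ≃ A :=
  Equiv.ofBijective _ hn.bijective_morVal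

theorem mul_morEquiv_iff (hn : IsRelNormalisedFrobenius mul unit)
    (m m' k : @Mor _ hn.groupoid) :
    mul (hn.morEquiv m, hn.morEquiv m') (hn.morEquiv k) ↔ @gMul _ hn.groupoid (m, m') k := by
  constructor
  · obtain ⟨e₁, e₂, f⟩ := m
    obtain ⟨e₃, e₄, g⟩ := m'
    intro (h : mul (f.1, g.1) (hn.morEquiv k))
    obtain rfl : e₃ = e₂ := Subtype.ext <|
      hn.unit_mul_self_unique e₃.2 e₂.2 g.2.1 (hn.unit_mul_self_of_mul_unit_self e₂.2 f.2.2 h)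
    refine ⟨_, _, _, f, g, rfl, rfl, hn.morEquiv.injective ?_⟩
    exact hn.mul_unique h (hn.exists_comp_unitHom f g).choose_spec
  · rintro ⟨_, _, _, f, g, rfl, rfl, rfl⟩
    exact (hn.exists_comp_unitHom f g).choose_spec

theorem unit_iff_exists_morEquiv_gId (hn : IsRelNormalisedFrobenius mul unit) (x : A) :
    unit () x ↔ ∃ e, x = hn.morEquiv (@gId _ hn.groupoid e) :=
  ⟨fun hx => ⟨⟨x, hx⟩, rfl⟩, by rintro ⟨e, rfl⟩; exact e.2⟩

end

end IsRelNormalisedFrobenius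

/-- normalisable dagger Frobenius algebras in `Rel` are in one-to-one
correspondence with groupoids: the morphism set of any groupoid with the composition and
unit relations (and identity normaliser) is a normalisable dagger Frobenius algebra, and
conversely every normalisable dagger Frobenius algebra in `Rel` arises this way up to a
bijection transporting the structure. -/
theorem rel_normalisable_iff_groupoid :
    (∀ (G : Type) [Groupoid G],
        IsRelNormalisable (gMul G) (gUnit G) (fun a b : Mor G => a = b)) ∧
    (∀ (A : Type) (mul : A × A → A → Prop) (unit : Unit → A → Prop) (z : A → A → Prop),
        IsRelNormalisable mul unit z →
        ∃ (G : Type) (inst : Groupoid G) (e : @Mor G inst ≃ A),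
          (∀ m m' k, mul (e m, e m') (e k) ↔ @gMul G inst (m, m') k) ∧
          (∀ x : A, unit () x ↔ ∃ a : G, x = e (@gId G inst a))) := by
  refine ⟨fun G _ => isRelNormalisable_iff.mpr ⟨rfl, isRelNormalisedFrobenius_gMul⟩, ?_⟩
  intro A mul unit z hz
  obtain ⟨-, hn⟩ := isRelNormalisable_iff.mp hz
  exact ⟨_, hn.groupoid, hn.morEquiv, hn.mul_morEquiv_iff, hn.unit_iff_exists_morEquiv_gId⟩
end

section
/- A relation R ⊆ Mor(G) × Mor(H) between the morphism-sets of groupoids G and H satisfies the abstract complete-positivity condition (in Rel) if and only if R respects inverses: (g,h) ∈ R implies (g⁻¹,h⁻¹) ∈ R and (id_{dom g}, id_{dom h}) ∈ R. -/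
open CategoryTheory

/-- The inverse of a morphism of a groupoid. -/
def gInv (G : Type) [Groupoid G] : Mor G → Mor G := fun m =>
  ⟨m.2.1, m.1, Groupoid.inv m.2.2⟩

/-- A relation between the morphism sets of two groupoids respects inverses when
`(g,h) ∈ R` implies `(g⁻¹,h⁻¹) ∈ R` and `(id_{dom g}, id_{dom h}) ∈ R`. -/
def RespectsInverses {G H : Type} [Groupoid G] [Groupoid H]
    (R : Mor G → Mor H → Prop) : Prop :=
  ∀ g h, R g h → R (gInv G g) (gInv H h) ∧ R (gId G g.1) (gId H h.1)

/-- The conjugated form `R̃ = (action_H) ∘ R ∘ (coaction_G)` of a relation `R` between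
the groupoid algebras: `R̃((g,g'),(h,h'))` holds iff `g⁻¹` and `g'` are composable,
`h⁻¹` and `h'` are composable, and `(g⁻¹∘g', h⁻¹∘h') ∈ R`. -/
def tilde {G H : Type} [Groupoid G] [Groupoid H] (R : Mor G → Mor H → Prop)
    (g g' : Mor G) (h h' : Mor H) : Prop :=
  ∃ k l, gMul G (gInv G g, g') k ∧ gMul H (gInv H h, h') l ∧ R k l

/-!
`R̃` relates `(g, g')` to `(h, h')` exactly when `g = ⟨a, b, f⟩`, `g' = ⟨a, c, f'⟩` share a source,
so do `h = ⟨x, y, p⟩`, `h' = ⟨x, z, p'⟩`, and `R (f⁻¹ ≫ f') (p⁻¹ ≫ p')`. Swapping the pairs inverts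
`f⁻¹ ≫ f'`, and the diagonal turns it into an identity; conversely, taking `g = 𝟙 a` and `h = 𝟙 x`
recovers `R` itself from `R̃`.
-/

section

variable {G H : Type} [Groupoid G] [Groupoid H]

lemma gMul_mk_iff {a b : G} (f : a ⟶ b) (m k : Mor G) :
    gMul G (⟨a, b, f⟩, m) k ↔ ∃ (c : G) (g : b ⟶ c), m = ⟨b, c, g⟩ ∧ k = ⟨a, c, f ≫ g⟩ := by
  constructor
  · rintro ⟨a', b', c, f', g, hf, rfl, rfl⟩
    obtain ⟨rfl, hf⟩ := Sigma.mk.inj_iff.mp hf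
    obtain ⟨rfl, hf⟩ := Sigma.mk.inj_iff.mp (eq_of_heq hf)
    cases hf
    exact ⟨c, g, rfl, rfl⟩
  · rintro ⟨c, g, rfl, rfl⟩
    exact ⟨a, b, c, f, g, rfl, rfl, rfl⟩

lemma tilde_mk_iff (R : Mor G → Mor H → Prop) {a b : G} {x y : H} (f : a ⟶ b) (p : x ⟶ y)
    (g' : Mor G) (h' : Mor H) :
    tilde R ⟨a, b, f⟩ g' ⟨x, y, p⟩ h' ↔
      ∃ (c : G) (f' : a ⟶ c) (z : H) (p' : x ⟶ z), g' = ⟨a, c, f'⟩ ∧ h' = ⟨x, z, p'⟩ ∧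
        R ⟨b, c, Groupoid.inv f ≫ f'⟩ ⟨y, z, Groupoid.inv p ≫ p'⟩ := by
  simp only [tilde, gInv, gMul_mk_iff]
  constructor
  · rintro ⟨_, _, ⟨c, f', rfl, rfl⟩, ⟨z, p', rfl, rfl⟩, hR⟩
    exact ⟨c, f', z, p', rfl, rfl, hR⟩
  · rintro ⟨c, f', z, p', rfl, rfl, hR⟩
    exact ⟨_, _, ⟨c, f', rfl, rfl⟩, ⟨z, p', rfl, rfl⟩, hR⟩

lemma tilde_mk_mk_iff (R : Mor G → Mor H → Prop) {a b c : G} {x y z : H}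
    (f : a ⟶ b) (f' : a ⟶ c) (p : x ⟶ y) (p' : x ⟶ z) :
    tilde R ⟨a, b, f⟩ ⟨a, c, f'⟩ ⟨x, y, p⟩ ⟨x, z, p'⟩ ↔
      R ⟨b, c, Groupoid.inv f ≫ f'⟩ ⟨y, z, Groupoid.inv p ≫ p'⟩ := by
  rw [tilde_mk_iff]
  constructor
  · rintro ⟨c, f', z, p', hg, hh, hR⟩
    cases hg; cases hh
    exact hR
  · exact fun hR ↦ ⟨c, f', z, p', rfl, rfl, hR⟩

lemma gInv_mk_inv_comp {a b c : G} (f : a ⟶ b) (f' : a ⟶ c) :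
    gInv G ⟨b, c, Groupoid.inv f ≫ f'⟩ = ⟨c, b, Groupoid.inv f' ≫ f⟩ := by
  simp [gInv, Groupoid.inv_eq_inv]

lemma tilde_id_left_iff (R : Mor G → Mor H → Prop) (g : Mor G) (h : Mor H) :
    tilde R (gId G g.1) g (gId H h.1) h ↔ R g h := by
  obtain ⟨a, b, f⟩ := g
  obtain ⟨x, y, p⟩ := h
  simp [gId, tilde_mk_mk_iff, Groupoid.inv_eq_inv]

lemma tilde_id_right_iff (R : Mor G → Mor H → Prop) (g : Mor G) (h : Mor H) :
    tilde R g (gId G g.1) h (gId H h.1) ↔ R (gInv G g) (gInv H h) := by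
  obtain ⟨a, b, f⟩ := g
  obtain ⟨x, y, p⟩ := h
  simp [gId, gInv, tilde_mk_mk_iff]

lemma tilde_id_id_iff (R : Mor G → Mor H → Prop) (a : G) (x : H) :
    tilde R (gId G a) (gId G a) (gId H x) (gId H x) ↔ R (gId G a) (gId H x) := by
  simp [gId, tilde_mk_mk_iff, Groupoid.inv_eq_inv]

end

/-- a relation `R` between the morphism sets of groupoids `G` and `H`
satisfies the abstract complete-positivity (CP*) condition in `Rel` — i.e. its
conjugated form `R̃` is closed under swapping and the diagonal — if and only if `R`
respects inverses. -/
theorem cpstar_iff_respects_inverses {G H : Type} [Groupoid G] [Groupoid H]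
    (R : Mor G → Mor H → Prop) :
    (∀ g g' h h', tilde R g g' h h' → tilde R g' g h' h ∧ tilde R g g h h) ↔
      RespectsInverses R := by
  constructor
  · intro hCP g h hR
    obtain ⟨hswap, hdiag⟩ := hCP _ g _ h ((tilde_id_left_iff R g h).mpr hR)
    exact ⟨(tilde_id_right_iff R g h).mp hswap, (tilde_id_id_iff R g.1 h.1).mp hdiag⟩
  · rintro hRI ⟨a, b, f⟩ g' ⟨x, y, p⟩ h' ht
    obtain ⟨c, f', z, p', rfl, rfl, hR⟩ := (tilde_mk_iff R f p g' h').mp ht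
    obtain ⟨hinv, hid⟩ := hRI _ _ hR
    rw [gInv_mk_inv_comp, gInv_mk_inv_comp] at hinv
    refine ⟨(tilde_mk_mk_iff R f' f p' p).mpr hinv, (tilde_mk_mk_iff R f f p p).mpr ?_⟩
    simpa [gId] using hid
end
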